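/- The E7 projective configuration of 63 lines is saturated: every set of mutually orthogonal lines in the configuration is contained in a set of 7 mutually orthogonal lines of the configuration. -/

import Mathlib

/-- The projective line (ray) spanned by a vector in `ℝ⁸`. -/
def ray8 (v : Fin 8 → ℝ) : Submodule ℝ (Fin 8 → ℝ) := Submodule.span ℝ {v}

/-- Orthogonality of subspaces of `ℝ⁸` with respect to the standard inner product. -/
def Perp8 (L M : Submodule ℝ (Fin 8 → ℝ)) : Prop :=
  ∀ x ∈ L, ∀ y ∈ M, ∑ i, x i * y i = 0

/-- The `E7` root system, modeled in the hyperplane `{Σ aᵢ = 0} ⊂ ℝ⁸` as the union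
of the `S₈`-orbits of `(1,−1,0,0,0,0,0,0)` and `(1/2)(1,1,1,1,−1,−1,−1,−1)`. -/
def E7roots : Set (Fin 8 → ℝ) :=
  {v | ∃ σ : Equiv.Perm (Fin 8),
    v = ![1, -1, 0, 0, 0, 0, 0, 0] ∘ σ ∨
    v = ((1 : ℝ) / 2) • (![1, 1, 1, 1, -1, -1, -1, -1] ∘ σ)}

/-- The 63 projective lines of the `E7` configuration. -/
def E7lines : Set (Submodule ℝ (Fin 8 → ℝ)) := ray8 '' E7roots

/-!
Each line of the configuration is spanned by a vector `e_a - e_b` or by a `±1`-vector with four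
entries `+1`, so the 63 lines have integer representatives and orthogonality of lines becomes the
vanishing of integer dot products. Saturation is then a property of the orthogonality graph on 63
vertices: it has no clique of size 8, and every clique of size less than 7 has a common neighbour,
so every clique grows one vertex at a time into a 7-clique. Both facts are checked by the kernel
through an exhaustive enumeration of all cliques of the graph.
-/

theorem ray8_smul {c : ℝ} (hc : c ≠ 0) (v : Fin 8 → ℝ) : ray8 (c • v) = ray8 v :=
  Submodule.span_singleton_smul_eq hc.isUnit v

theorem ray8_neg (v : Fin 8 → ℝ) : ray8 (-v) = ray8 v := by
  rw [← neg_one_smul ℝ v, ray8_smul (by norm_num)]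

theorem perp8_ray8_iff {v w : Fin 8 → ℝ} : Perp8 (ray8 v) (ray8 w) ↔ v ⬝ᵥ w = 0 := by
  refine ⟨fun h => h v (Submodule.mem_span_singleton_self v) w
    (Submodule.mem_span_singleton_self w), fun h x hx y hy => ?_⟩
  obtain ⟨c, rfl⟩ := Submodule.mem_span_singleton.1 hx
  obtain ⟨d, rfl⟩ := Submodule.mem_span_singleton.1 hy
  change (c • v) ⬝ᵥ (d • w) = 0
  simp [h]

theorem sq_dotProduct_eq_of_ray8_eq {v w : Fin 8 → ℝ} (h : ray8 v = ray8 w) :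
    (v ⬝ᵥ w) ^ 2 = (v ⬝ᵥ v) * (w ⬝ᵥ w) := by
  have hw : w ∈ ray8 v := h ▸ Submodule.mem_span_singleton_self w
  obtain ⟨c, rfl⟩ := Submodule.mem_span_singleton.1 hw
  simp only [dotProduct_smul, smul_dotProduct, smul_eq_mul]
  ring

section Roots

variable {ι R S : Type*} [DecidableEq ι] [Ring R] [Ring S]

def rootDiff (a b : ι) : ι → R := Pi.single a 1 - Pi.single b 1

def signVec (T : Finset ι) : ι → R := fun j => if j ∈ T then 1 else -1

theorem rootDiff_comp_equiv (a b : ι) (σ : Equiv.Perm ι) :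
    (rootDiff a b : ι → R) ∘ σ = rootDiff (σ.symm a) (σ.symm b) := by
  ext j
  simp [rootDiff, Pi.single_apply, ← Equiv.eq_symm_apply]

theorem signVec_comp_equiv (T : Finset ι) (σ : Equiv.Perm ι) :
    (signVec T : ι → R) ∘ σ = signVec (T.map σ.symm.toEmbedding) := by
  ext j
  simp [signVec, Finset.mem_map_equiv]

theorem map_comp_rootDiff (f : R →+* S) (a b : ι) : f ∘ rootDiff a b = rootDiff a b := by
  ext j
  simp [rootDiff, Pi.single_apply, apply_ite f]

theorem map_comp_signVec (f : R →+* S) (T : Finset ι) : f ∘ signVec T = signVec T := by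
  ext j
  simp [signVec, apply_ite f]

end Roots

theorem E7lines_eq : E7lines = {L | (∃ a b, a ≠ b ∧ L = ray8 (rootDiff a b)) ∨
    ∃ T : Finset (Fin 8), T.card = 4 ∧ L = ray8 (signVec T)} := by
  have hdiff : (![1, -1, 0, 0, 0, 0, 0, 0] : Fin 8 → ℝ) = rootDiff 0 1 := by
    ext k; fin_cases k <;> simp [rootDiff]
  have hsign : (![1, 1, 1, 1, -1, -1, -1, -1] : Fin 8 → ℝ) = signVec {0, 1, 2, 3} := by
    ext k; fin_cases k <;> simp [signVec]
  ext L
  constructor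
  · rintro ⟨v, ⟨σ, rfl | rfl⟩, rfl⟩
    · rw [hdiff, rootDiff_comp_equiv]
      exact Or.inl ⟨_, _, by simp, rfl⟩
    · rw [hsign, signVec_comp_equiv, ray8_smul (by norm_num)]
      exact Or.inr ⟨_, by rw [Finset.card_map]; rfl, rfl⟩
  · rintro (⟨a, b, hab, rfl⟩ | ⟨T, hT, rfl⟩)
    · obtain ⟨σ, hσ⟩ := Equiv.Perm.exists_extending_pair ![0, 1] ![a, b] (by decide)
        (by intro x y; fin_cases x <;> fin_cases y <;> simp [hab, hab.symm])
      refine ⟨_, ⟨σ.symm, Or.inl rfl⟩, ?_⟩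
      rw [hdiff, rootDiff_comp_equiv]
      simpa using congr_arg₂ (fun x y => ray8 (rootDiff x y)) (hσ 0) (hσ 1)
    · obtain ⟨σ, hσ⟩ := Equiv.Perm.exists_map_finset_eq {0, 1, 2, 3} T (by rw [hT]; rfl)
      refine ⟨_, ⟨σ.symm, Or.inr rfl⟩, ?_⟩
      rw [hsign, signVec_comp_equiv, ray8_smul (by norm_num), Equiv.symm_symm, hσ]

section CliqueSearch

variable {α : Type*} [LinearOrder α] (adj : α → α → Bool) (P : List α → Bool)

def forallCliques : ℕ → List α → List α → Bool
  | 0, _, _ => false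
  | fuel + 1, S, cand => P S && cand.all fun v =>
      forallCliques fuel (v :: S) (cand.filter fun w => v < w && adj v w)

variable {adj P} in
theorem forallCliques_sound {fuel : ℕ} {S cand : List α}
    (h : forallCliques adj P fuel S cand = true) {T : List α}
    (hT : T.Pairwise (· < ·)) (hTadj : T.Pairwise (adj · ·))
    (hTcand : ∀ t ∈ T, t ∈ cand ∧ ∀ s ∈ S, adj s t) :
    P (T.reverse ++ S) = true := by
  induction fuel generalizing S cand T with
  | zero => simp [forallCliques] at h
  | succ fuel ih =>
    simp only [forallCliques, Bool.and_eq_true, List.all_eq_true] at h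
    cases T with
    | nil => exact h.1
    | cons v T =>
      rw [List.pairwise_cons] at hT hTadj
      have hv := hTcand v List.mem_cons_self
      rw [List.reverse_cons, List.append_assoc]
      refine ih (h.2 v hv.1) hT.2 hTadj.2 fun t ht => ⟨?_, ?_⟩
      · simp [(hTcand t (List.mem_cons_of_mem v ht)).1, hT.1 t ht, hTadj.1 t ht]
      · rintro s (_ | ⟨_, hs⟩)
        exacts [hTadj.1 t ht, (hTcand t (List.mem_cons_of_mem v ht)).2 s hs]

end CliqueSearch

def ofBitIndices (l : List ℕ) : ℕ := l.foldr (fun j m => 2 ^ j ||| m) 0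

theorem testBit_ofBitIndices (l : List ℕ) (k : ℕ) :
    (ofBitIndices l).testBit k = decide (k ∈ l) := by
  induction l with
  | nil => simp [ofBitIndices]
  | cons j l ih =>
    simp only [ofBitIndices, List.foldr_cons] at ih ⊢
    simp [Nat.testBit_or, Nat.testBit_two_pow, ih, eq_comm]

section AdjMask

variable {n : ℕ} (adj : Fin n → Fin n → Bool)

def adjMask (i : Fin n) : ℕ := ofBitIndices (((List.finRange n).filter (adj i)).map Fin.val)

theorem testBit_adjMask (i j : Fin n) : (adjMask adj i).testBit j = adj i j := by
  simp [adjMask, testBit_ofBitIndices, Fin.val_inj]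

def commonMask (S : List (Fin n)) : ℕ := S.foldr (fun i m => adjMask adj i &&& m) (2 ^ n - 1)

theorem testBit_commonMask (S : List (Fin n)) (j : Fin n) :
    (commonMask adj S).testBit j = S.all (adj · j) := by
  induction S with
  | nil => simp [commonMask, Nat.testBit_two_pow_sub_one]
  | cons i S ih =>
    simp only [commonMask, List.foldr_cons] at ih ⊢
    rw [Nat.testBit_land, ih, testBit_adjMask, List.all_cons]

theorem commonMask_lt (S : List (Fin n)) : commonMask adj S < 2 ^ n := by
  induction S with
  | nil => exact Nat.sub_lt (Nat.two_pow_pos n) Nat.one_pos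
  | cons i S ih => exact Nat.and_le_right.trans_lt ih

theorem exists_forall_adj_of_commonMask_ne_zero {S : List (Fin n)} (h : commonMask adj S ≠ 0) :
    ∃ j, ∀ s ∈ S, adj s j = true := by
  obtain ⟨j, hj⟩ := Nat.exists_testBit_of_ne_zero h
  have hjn : j < n := by
    by_contra! hjn
    rw [Nat.testBit_lt_two_pow ((commonMask_lt adj S).trans_le
      (Nat.pow_le_pow_right two_pos hjn))] at hj
    exact Bool.false_ne_true hj
  refine ⟨⟨j, hjn⟩, ?_⟩
  simpa using (testBit_commonMask adj S ⟨j, hjn⟩).symm.trans hj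

def saturationCheck (k : ℕ) (S : List (Fin n)) : Bool :=
  S.length == k || S.length < k && commonMask adj S != 0

end AdjMask

namespace SimpleGraph

variable {α : Type*} {G : SimpleGraph α}

theorem exists_isNClique_superset [DecidableEq α] {k : ℕ}
    (hext : ∀ s : Finset α, G.IsClique (s : Set α) → s.card < k →
      ∃ j, ∀ i ∈ s, G.Adj i j)
    {s : Finset α} (hs : G.IsClique (s : Set α)) (hsk : s.card ≤ k) :
    ∃ t, s ⊆ t ∧ G.IsNClique k t := by
  induction hd : k - s.card generalizing s with
  | zero => exact ⟨s, subset_rfl, hs, by omega⟩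
  | succ d ih =>
    obtain ⟨j, hj⟩ := hext s hs (by omega)
    have hjs : j ∉ s := fun h => (hj j h).ne rfl
    have hclique : G.IsClique (insert j s : Finset α) := by
      rw [Finset.coe_insert, isClique_insert]
      exact ⟨hs, fun i hi _ => (hj i hi).symm⟩
    have hcard : (insert j s).card = s.card + 1 := Finset.card_insert_of_notMem hjs
    obtain ⟨t, hst, ht⟩ := ih hclique (by omega) (by omega)
    exact ⟨t, (Finset.subset_insert j s).trans hst, ht⟩

theorem IsClique.card_le_and_exists_adj_of_forallCliques {n k fuel : ℕ}
    {G : SimpleGraph (Fin n)} [DecidableRel G.Adj]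
    -- Reading adjacency from the bitmasks keeps the kernel's evaluation of the search fast.
    (hsearch : forallCliques (fun v w => (adjMask (G.Adj · ·) v).testBit w)
      (saturationCheck (G.Adj · ·) k) fuel [] (List.finRange n) = true)
    {s : Finset (Fin n)} (hs : G.IsClique (s : Set (Fin n))) :
    s.card ≤ k ∧ (s.card < k → ∃ j, ∀ i ∈ s, G.Adj i j) := by
  set T := s.sort (· ≤ ·)
  have hmem : ∀ i, i ∈ T ↔ i ∈ s := fun i => s.mem_sort _
  have hlen : T.length = s.card := s.length_sort _
  have hT : T.Pairwise (· < ·) := s.sortedLT_sort.pairwise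
  have hTadj : T.Pairwise (fun v w => (adjMask (G.Adj · ·) v).testBit w) := by
    simp only [testBit_adjMask, decide_eq_true_eq]
    exact hT.imp_of_mem fun ha hb hab => hs ((hmem _).1 ha) ((hmem _).1 hb) hab.ne
  have hcheck := forallCliques_sound hsearch hT hTadj fun t _ => ⟨List.mem_finRange t, by simp⟩
  simp only [saturationCheck, List.append_nil, List.length_reverse, hlen,
    Bool.or_eq_true, beq_iff_eq, Bool.and_eq_true, decide_eq_true_eq, bne_iff_ne] at hcheck
  rcases hcheck with hk | ⟨hk, hne⟩
  · exact ⟨hk.le, fun h => absurd hk h.ne⟩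
  · refine ⟨hk.le, fun _ => ?_⟩
    obtain ⟨j, hj⟩ := exists_forall_adj_of_commonMask_ne_zero _ hne
    exact ⟨j, fun i hi => by simpa using hj i (by simpa [hmem] using hi)⟩

theorem exists_isNClique_superset_of_forallCliques {n k fuel : ℕ} {G : SimpleGraph (Fin n)}
    [DecidableRel G.Adj]
    (hsearch : forallCliques (fun v w => (adjMask (G.Adj · ·) v).testBit w)
      (saturationCheck (G.Adj · ·) k) fuel [] (List.finRange n) = true)
    {s : Finset (Fin n)} (hs : G.IsClique (s : Set (Fin n))) :
    ∃ t, s ⊆ t ∧ G.IsNClique k t :=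
  exists_isNClique_superset (fun _ ht => (ht.card_le_and_exists_adj_of_forallCliques hsearch).2) hs
    (hs.card_le_and_exists_adj_of_forallCliques hsearch).1

end SimpleGraph

-- One root on each line: the 28 roots `e_a - e_b` with `a < b`, then twice the 35 roots
-- `½(±1, …, ±1)` with first entry `+½`.
def e7Root : Fin 63 → Fin 8 → ℤ :=
  ![![1, -1, 0, 0, 0, 0, 0, 0],
    ![1, 0, -1, 0, 0, 0, 0, 0],
    ![1, 0, 0, -1, 0, 0, 0, 0],
    ![1, 0, 0, 0, -1, 0, 0, 0],
    ![1, 0, 0, 0, 0, -1, 0, 0],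
    ![1, 0, 0, 0, 0, 0, -1, 0],
    ![1, 0, 0, 0, 0, 0, 0, -1],
    ![0, 1, -1, 0, 0, 0, 0, 0],
    ![0, 1, 0, -1, 0, 0, 0, 0],
    ![0, 1, 0, 0, -1, 0, 0, 0],
    ![0, 1, 0, 0, 0, -1, 0, 0],
    ![0, 1, 0, 0, 0, 0, -1, 0],
    ![0, 1, 0, 0, 0, 0, 0, -1],
    ![0, 0, 1, -1, 0, 0, 0, 0],
    ![0, 0, 1, 0, -1, 0, 0, 0],
    ![0, 0, 1, 0, 0, -1, 0, 0],
    ![0, 0, 1, 0, 0, 0, -1, 0],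
    ![0, 0, 1, 0, 0, 0, 0, -1],
    ![0, 0, 0, 1, -1, 0, 0, 0],
    ![0, 0, 0, 1, 0, -1, 0, 0],
    ![0, 0, 0, 1, 0, 0, -1, 0],
    ![0, 0, 0, 1, 0, 0, 0, -1],
    ![0, 0, 0, 0, 1, -1, 0, 0],
    ![0, 0, 0, 0, 1, 0, -1, 0],
    ![0, 0, 0, 0, 1, 0, 0, -1],
    ![0, 0, 0, 0, 0, 1, -1, 0],
    ![0, 0, 0, 0, 0, 1, 0, -1],
    ![0, 0, 0, 0, 0, 0, 1, -1],
    ![1, 1, 1, 1, -1, -1, -1, -1],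
    ![1, 1, 1, -1, 1, -1, -1, -1],
    ![1, 1, 1, -1, -1, 1, -1, -1],
    ![1, 1, 1, -1, -1, -1, 1, -1],
    ![1, 1, 1, -1, -1, -1, -1, 1],
    ![1, 1, -1, 1, 1, -1, -1, -1],
    ![1, 1, -1, 1, -1, 1, -1, -1],
    ![1, 1, -1, 1, -1, -1, 1, -1],
    ![1, 1, -1, 1, -1, -1, -1, 1],
    ![1, 1, -1, -1, 1, 1, -1, -1],
    ![1, 1, -1, -1, 1, -1, 1, -1],
    ![1, 1, -1, -1, 1, -1, -1, 1],
    ![1, 1, -1, -1, -1, 1, 1, -1],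
    ![1, 1, -1, -1, -1, 1, -1, 1],
    ![1, 1, -1, -1, -1, -1, 1, 1],
    ![1, -1, 1, 1, 1, -1, -1, -1],
    ![1, -1, 1, 1, -1, 1, -1, -1],
    ![1, -1, 1, 1, -1, -1, 1, -1],
    ![1, -1, 1, 1, -1, -1, -1, 1],
    ![1, -1, 1, -1, 1, 1, -1, -1],
    ![1, -1, 1, -1, 1, -1, 1, -1],
    ![1, -1, 1, -1, 1, -1, -1, 1],
    ![1, -1, 1, -1, -1, 1, 1, -1],
    ![1, -1, 1, -1, -1, 1, -1, 1],
    ![1, -1, 1, -1, -1, -1, 1, 1],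
    ![1, -1, -1, 1, 1, 1, -1, -1],
    ![1, -1, -1, 1, 1, -1, 1, -1],
    ![1, -1, -1, 1, 1, -1, -1, 1],
    ![1, -1, -1, 1, -1, 1, 1, -1],
    ![1, -1, -1, 1, -1, 1, -1, 1],
    ![1, -1, -1, 1, -1, -1, 1, 1],
    ![1, -1, -1, -1, 1, 1, 1, -1],
    ![1, -1, -1, -1, 1, 1, -1, 1],
    ![1, -1, -1, -1, 1, -1, 1, 1],
    ![1, -1, -1, -1, -1, 1, 1, 1]]


def e7Line (i : Fin 63) : Submodule ℝ (Fin 8 → ℝ) := ray8 (Int.castRingHom ℝ ∘ e7Root i)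

theorem exists_e7Root_eq_rootDiff : ∀ a b : Fin 8, a ≠ b →
    ∃ i, e7Root i = rootDiff a b ∨ e7Root i = -rootDiff a b := by
  decide +kernel

theorem exists_e7Root_eq_signVec : ∀ T : Finset (Fin 8), T.card = 4 →
    ∃ i, e7Root i = signVec T ∨ e7Root i = -signVec T := by
  decide +kernel

theorem e7Root_cases : ∀ i, (∃ a b : Fin 8, a ≠ b ∧ e7Root i = rootDiff a b) ∨
    ∃ T : Finset (Fin 8), T.card = 4 ∧ e7Root i = signVec T := by
  decide +kernel

theorem e7Root_eq_of_sq_dotProduct_eq : ∀ i j,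
    (e7Root i ⬝ᵥ e7Root j) ^ 2 = (e7Root i ⬝ᵥ e7Root i) * (e7Root j ⬝ᵥ e7Root j) →
      i = j := by
  decide +kernel

theorem e7Root_dotProduct_self_ne_zero : ∀ i, e7Root i ⬝ᵥ e7Root i ≠ 0 := by
  decide +kernel

theorem e7Line_eq_of_eq {i : Fin 63} {v : Fin 8 → ℤ} (h : e7Root i = v ∨ e7Root i = -v) :
    e7Line i = ray8 (Int.castRingHom ℝ ∘ v) := by
  rcases h with h | h <;> rw [e7Line, h]
  rw [← ray8_neg]
  congr 1
  ext
  simp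

theorem E7lines_eq_range : E7lines = Set.range e7Line := by
  ext L
  rw [E7lines_eq]
  constructor
  · rintro (⟨a, b, hab, rfl⟩ | ⟨T, hT, rfl⟩)
    · obtain ⟨i, hi⟩ := exists_e7Root_eq_rootDiff a b hab
      exact ⟨i, by rw [e7Line_eq_of_eq hi, map_comp_rootDiff]⟩
    · obtain ⟨i, hi⟩ := exists_e7Root_eq_signVec T hT
      exact ⟨i, by rw [e7Line_eq_of_eq hi, map_comp_signVec]⟩
  · rintro ⟨i, rfl⟩
    rcases e7Root_cases i with ⟨a, b, hab, hi⟩ | ⟨T, hT, hi⟩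
    · exact Or.inl ⟨a, b, hab, by rw [e7Line, hi, map_comp_rootDiff]⟩
    · exact Or.inr ⟨T, hT, by rw [e7Line, hi, map_comp_signVec]⟩

theorem perp8_e7Line_iff {i j : Fin 63} :
    Perp8 (e7Line i) (e7Line j) ↔ e7Root i ⬝ᵥ e7Root j = 0 := by
  rw [e7Line, e7Line, perp8_ray8_iff, ← RingHom.map_dotProduct, eq_intCast, Int.cast_eq_zero]

theorem e7Line_injective : Function.Injective e7Line := by
  intro i j h
  apply e7Root_eq_of_sq_dotProduct_eq
  have := sq_dotProduct_eq_of_ray8_eq h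
  simp only [← RingHom.map_dotProduct, eq_intCast] at this
  exact_mod_cast this

def e7Graph : SimpleGraph (Fin 63) where
  Adj i j := e7Root i ⬝ᵥ e7Root j = 0
  symm := ⟨fun _ _ h => (dotProduct_comm _ _).trans h⟩
  loopless := ⟨e7Root_dotProduct_self_ne_zero⟩

instance : DecidableRel e7Graph.Adj := fun i j =>
  inferInstanceAs (Decidable (e7Root i ⬝ᵥ e7Root j = 0))

theorem isClique_e7Graph_iff (T : Set (Fin 63)) :
    e7Graph.IsClique T ↔ (e7Line '' T).Pairwise Perp8 := by
  rw [e7Line_injective.injOn.pairwise_image, SimpleGraph.isClique_iff]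
  simp only [Set.Pairwise, Function.onFun, perp8_e7Line_iff]
  rfl

theorem e7Graph_forallCliques :
    forallCliques (fun v w => (adjMask (e7Graph.Adj · ·) v).testBit w)
      (saturationCheck (e7Graph.Adj · ·) 7) 8 [] (List.finRange 63) = true := by
  decide +kernel

/-- the `E7` configuration is saturated: every set of mutually
orthogonal lines of the configuration is contained in a set of 7 mutually orthogonal
lines of the configuration. -/
theorem stmt_10 :
    ∀ U ⊆ E7lines, U.Pairwise Perp8 →
      ∃ M, U ⊆ M ∧ M ⊆ E7lines ∧ M.ncard = 7 ∧ M.Pairwise Perp8 := by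
  intro U hU hUperp
  rw [E7lines_eq_range] at hU ⊢
  obtain ⟨T, rfl⟩ : ∃ T : Finset (Fin 63), e7Line '' T = U :=
    ⟨(e7Line ⁻¹' U).toFinite.toFinset, by simpa using Set.image_preimage_eq_of_subset hU⟩
  obtain ⟨M, hTM, hM⟩ := SimpleGraph.exists_isNClique_superset_of_forallCliques
    e7Graph_forallCliques ((isClique_e7Graph_iff _).2 hUperp)
  refine ⟨e7Line '' M, Set.image_mono (by simpa using hTM), Set.image_subset_range _ _, ?_,
    (isClique_e7Graph_iff _).1 hM.isClique⟩
  rw [Set.ncard_image_of_injective _ e7Line_injective, Set.ncard_coe_finset, hM.card_eq]
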